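/- arXiv:2511.07032 — 2 statements merged into one kernel-verified Lean document; each statement's English description precedes it below -/
import Mathlib

section
/- Let Z be a measurable space, let p_s, p_{s'}, p★ be probability measures on Z, let L_s, L_{s'} : Z → ℝ be bounded measurable losses, and let C_s, C_{s'} ≥ 0. Let D be any function assigning a nonnegative real number to each ordered pair of probability measures on Z, and assume |∫ L_s dp − ∫ L_s dq| ≤ C_s · D(p,q) and |∫ L_{s'} dp − ∫ L_{s'} dq| ≤ C_{s'} · D(p,q) for all probability measures p, q on Z. Suppose moreover that |L_s(z) − L_{s'}(z)| ≤ K for p★-almost every z ∈ Z. Then |∫ L_s dp_s − ∫ L_{s'} dp_{s'}| ≤ C_s · D(p_s, p★) + C_{s'} · D(p_{s'}, p★) + K. -/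
open MeasureTheory
open scoped ENNReal

/-- group fairness disparity bound, abstract discrepancy: let `ps, ps', pstar`
be probability measures on `Z`, `Ls, Ls'` bounded measurable losses, `Cs, Cs' ≥ 0`, and let
`D` be a nonnegative discrepancy on pairs of probability measures satisfying the
discrepancy-Lipschitz condition (A1) for `Ls` and `Ls'`.  If `|Ls z − Ls' z| ≤ K` for
`pstar`-almost every `z`, then
`|∫ Ls dps − ∫ Ls' dps'| ≤ Cs · D(ps, pstar) + Cs' · D(ps', pstar) + K`. -/
theorem group_disparity_bound
    {Z : Type*} [MeasurableSpace Z]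
    (ps ps' pstar : Measure Z)
    [IsProbabilityMeasure ps] [IsProbabilityMeasure ps'] [IsProbabilityMeasure pstar]
    (Ls Ls' : Z → ℝ) (hLs : Measurable Ls) (hLs' : Measurable Ls')
    (hLsBdd : ∃ B : ℝ, ∀ z, |Ls z| ≤ B) (hLs'Bdd : ∃ B : ℝ, ∀ z, |Ls' z| ≤ B)
    (Cs Cs' : ℝ) (hCs : 0 ≤ Cs) (hCs' : 0 ≤ Cs')
    (D : Measure Z → Measure Z → ℝ)
    (hD : ∀ p q : Measure Z, IsProbabilityMeasure p → IsProbabilityMeasure q → 0 ≤ D p q)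
    (hA1s : ∀ p q : Measure Z, IsProbabilityMeasure p → IsProbabilityMeasure q →
      |∫ z, Ls z ∂p - ∫ z, Ls z ∂q| ≤ Cs * D p q)
    (hA1s' : ∀ p q : Measure Z, IsProbabilityMeasure p → IsProbabilityMeasure q →
      |∫ z, Ls' z ∂p - ∫ z, Ls' z ∂q| ≤ Cs' * D p q)
    (K : ℝ) (hK : ∀ᵐ z ∂pstar, |Ls z - Ls' z| ≤ K) :
    |∫ z, Ls z ∂ps - ∫ z, Ls' z ∂ps'| ≤ Cs * D ps pstar + Cs' * D ps' pstar + K := by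
  obtain ⟨B, hB⟩ := hLsBdd
  obtain ⟨B', hB'⟩ := hLs'Bdd
  have hint : Integrable Ls pstar := by
    refine ⟨hLs.aestronglyMeasurable, ?_⟩
    exact (hasFiniteIntegral_const B).mono (Filter.Eventually.of_forall fun z => by
      exact (hB z).trans (le_abs_self B))
  have hint' : Integrable Ls' pstar := by
    refine ⟨hLs'.aestronglyMeasurable, ?_⟩
    exact (hasFiniteIntegral_const B').mono (Filter.Eventually.of_forall fun z => by
      exact (hB' z).trans (le_abs_self B'))
  have hmid : |∫ z, Ls z ∂pstar - ∫ z, Ls' z ∂pstar| ≤ K := by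
    rw [← integral_sub hint hint']
    calc |∫ z, Ls z - Ls' z ∂pstar| ≤ ∫ z, |Ls z - Ls' z| ∂pstar :=
          by simpa using norm_integral_le_integral_norm (fun z => Ls z - Ls' z)
      _ ≤ ∫ _z, K ∂pstar := integral_mono_ae (hint.sub hint').abs
            (integrable_const K) hK
      _ = K := by simp
  have h1 := hA1s ps pstar inferInstance inferInstance
  have h2 := hA1s' pstar ps' inferInstance inferInstance
  have key : |∫ z, Ls z ∂ps - ∫ z, Ls' z ∂ps'| ≤
      |∫ z, Ls z ∂ps - ∫ z, Ls z ∂pstar| + |∫ z, Ls z ∂pstar - ∫ z, Ls' z ∂pstar|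
        + |∫ z, Ls' z ∂pstar - ∫ z, Ls' z ∂ps'| := by
    have := abs_sub_le (∫ z, Ls z ∂ps) (∫ z, Ls z ∂pstar) (∫ z, Ls' z ∂ps')
    have h2' := abs_sub_le (∫ z, Ls z ∂pstar) (∫ z, Ls' z ∂pstar) (∫ z, Ls' z ∂ps')
    linarith
  have h2'' : |∫ z, Ls' z ∂pstar - ∫ z, Ls' z ∂ps'| ≤ Cs' * D ps' pstar := by
    rw [abs_sub_comm]
    exact hA1s' ps' pstar inferInstance inferInstance
  linarith
end

section
/- Let X be a metric space, let p_s, p_{s'}, p★ be probability measures on X with finite second moments, and let L_s, L_{s'} : X → ℝ be Lipschitz functions with Lipschitz constants ℓ_s, ℓ_{s'} respectively, integrable with respect to these measures. Suppose |L_s(z) − L_{s'}(z)| ≤ K for p★-almost every z ∈ X. Then |∫ L_s dp_s − ∫ L_{s'} dp_{s'}| ≤ ℓ_s · W₂(p_s, p★) + ℓ_{s'} · W₂(p_{s'}, p★) + K. -/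
open MeasureTheory
open scoped ENNReal NNReal

/-- The 2-Wasserstein distance between two measures, as an extended nonnegative real:
the infimum over couplings of the integral of the squared distance, to the power 1/2. -/
noncomputable def W2 {X : Type*} [MeasurableSpace X] [PseudoEMetricSpace X]
    (p q : Measure X) : ℝ≥0∞ :=
  (⨅ γ ∈ {γ : Measure (X × X) | γ.map Prod.fst = p ∧ γ.map Prod.snd = q},
    ∫⁻ z, edist z.1 z.2 ^ 2 ∂γ) ^ (1 / 2 : ℝ)

/-- A measure on a metric space has finite second moments. -/
def FiniteSecondMoment {X : Type*} [MeasurableSpace X] [PseudoEMetricSpace X]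
    (p : Measure X) : Prop :=
  ∀ x₀ : X, ∫⁻ x, edist x x₀ ^ 2 ∂p ≠ ∞

/-!
Integrating `L z₁ - L z₂` against a coupling `γ` of `p` and `q` gives
`|∫ L dp - ∫ L dq| ≤ ℓ ∫ d dγ ≤ ℓ (∫ d² dγ)^{1/2}` (Cauchy–Schwarz), and taking the infimum over
couplings yields `ℓ W₂(p, q)`. Finite second moments make `W₂` finite, so the bound survives
`toReal`. The theorem follows by comparing both integrals with the integrals against `p★`,
where `Ls` and `Ls'` differ by at most `K`.
-/

lemma lintegral_le_rpow_lintegral_sq {α : Type*} [MeasurableSpace α]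
    (μ : Measure α) [IsProbabilityMeasure μ] (f : α → ℝ≥0∞) :
    ∫⁻ a, f a ∂μ ≤ (∫⁻ a, f a ^ 2 ∂μ) ^ (1 / 2 : ℝ) := by
  -- No measurability of `f` is assumed (`edist` on a product of metric spaces need not be
  -- measurable), so Hölder is applied to a measurable minorant with the same integral.
  obtain ⟨g, hg_meas, hg_le, hg_eq⟩ := exists_measurable_le_lintegral_eq μ f
  have hCS := ENNReal.lintegral_mul_le_Lp_mul_Lq μ Real.HolderConjugate.two_two
    hg_meas.aemeasurable (aemeasurable_const (b := (1 : ℝ≥0∞)))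
  simp only [Pi.mul_apply, mul_one, lintegral_const, measure_univ, ENNReal.rpow_two, one_pow,
    ENNReal.one_rpow] at hCS
  rw [hg_eq]
  exact hCS.trans (by gcongr; exact hg_le _)

section Couplings

variable {α β : Type*} [MeasurableSpace α] [MeasurableSpace β]

def couplings (p : Measure α) (q : Measure β) : Set (Measure (α × β)) :=
  {γ | γ.map Prod.fst = p ∧ γ.map Prod.snd = q}

variable {p : Measure α} {q : Measure β} {γ : Measure (α × β)}

lemma prod_mem_couplings [IsProbabilityMeasure p] [IsProbabilityMeasure q] :
    p.prod q ∈ couplings p q := by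
  simp [couplings, Measure.map_fst_prod, Measure.map_snd_prod]

lemma isProbabilityMeasure_of_mem_couplings [IsProbabilityMeasure p] (hγ : γ ∈ couplings p q) :
    IsProbabilityMeasure γ := by
  constructor
  rw [← Set.preimage_univ (f := Prod.fst), ← Measure.map_apply measurable_fst .univ, hγ.1,
    measure_univ]

lemma lintegral_comp_fst_of_mem_couplings (hγ : γ ∈ couplings p q) {f : α → ℝ≥0∞}
    (hf : Measurable f) : ∫⁻ z, f z.1 ∂γ = ∫⁻ x, f x ∂p := by
  rw [← hγ.1, lintegral_map hf measurable_fst]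

lemma lintegral_comp_snd_of_mem_couplings (hγ : γ ∈ couplings p q) {f : β → ℝ≥0∞}
    (hf : Measurable f) : ∫⁻ z, f z.2 ∂γ = ∫⁻ y, f y ∂q := by
  rw [← hγ.2, lintegral_map hf measurable_snd]

end Couplings

section Wasserstein

variable {X : Type*} [PseudoMetricSpace X] [MeasurableSpace X]

lemma W2_eq_iInf_couplings (p q : Measure X) :
    W2 p q =
      ⨅ γ : couplings p q, (∫⁻ z, edist z.1 z.2 ^ 2 ∂(γ : Measure (X × X))) ^ (1 / 2 : ℝ) := by
  rw [W2, iInf_subtype']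
  exact (ENNReal.orderIsoRpow (1 / 2) (by norm_num)).map_iInf _

variable [OpensMeasurableSpace X] {p q : Measure X}

lemma lintegral_edist_sq_le_of_mem_couplings {γ : Measure (X × X)} (hγ : γ ∈ couplings p q)
    (x₀ : X) :
    ∫⁻ z, edist z.1 z.2 ^ 2 ∂γ ≤ 2 * (∫⁻ x, edist x x₀ ^ 2 ∂p + ∫⁻ y, edist y x₀ ^ 2 ∂q) := by
  have hmeas : Measurable fun x : X => edist x x₀ ^ 2 :=
    (continuous_id.edist continuous_const).measurable.pow_const 2
  have htri (z : X × X) : edist z.1 z.2 ^ 2 ≤ 2 * (edist z.1 x₀ ^ 2 + edist z.2 x₀ ^ 2) := by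
    have := ENNReal.rpow_add_le_mul_rpow_add_rpow (edist z.1 x₀) (edist z.2 x₀) one_le_two
    norm_num [ENNReal.rpow_two] at this
    exact (pow_le_pow_left' (edist_triangle_right _ _ _) 2).trans this
  calc ∫⁻ z, edist z.1 z.2 ^ 2 ∂γ
      ≤ ∫⁻ z, 2 * (edist z.1 x₀ ^ 2 + edist z.2 x₀ ^ 2) ∂γ := lintegral_mono htri
    _ = 2 * (∫⁻ x, edist x x₀ ^ 2 ∂p + ∫⁻ y, edist y x₀ ^ 2 ∂q) := by
      rw [lintegral_const_mul' _ _ ENNReal.ofNat_ne_top,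
        lintegral_add_left (f := fun z : X × X => edist z.1 x₀ ^ 2) (hmeas.comp measurable_fst),
        lintegral_comp_fst_of_mem_couplings hγ hmeas, lintegral_comp_snd_of_mem_couplings hγ hmeas]

lemma W2_ne_top [IsProbabilityMeasure p] [IsProbabilityMeasure q]
    (hp : FiniteSecondMoment p) (hq : FiniteSecondMoment q) : W2 p q ≠ ∞ := by
  obtain ⟨x₀⟩ : Nonempty X := nonempty_of_isProbabilityMeasure p
  have hcost : ∫⁻ z, edist z.1 z.2 ^ 2 ∂(p.prod q) ≠ ∞ :=
    ne_top_of_le_ne_top (by finiteness [hp x₀, hq x₀])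
      (lintegral_edist_sq_le_of_mem_couplings prod_mem_couplings x₀)
  rw [W2_eq_iInf_couplings]
  refine ne_top_of_le_ne_top ?_ (iInf_le _ ⟨_, prod_mem_couplings⟩)
  exact ENNReal.rpow_ne_top_of_nonneg one_half_pos.le hcost

end Wasserstein

section Lipschitz

variable {X : Type*} [PseudoMetricSpace X] [MeasurableSpace X] [OpensMeasurableSpace X]
  {p q : Measure X} {L : X → ℝ} {ℓ : ℝ≥0}

lemma enorm_integral_sub_le_of_mem_couplings {γ : Measure (X × X)} (hγ : γ ∈ couplings p q)
    (hL : LipschitzWith ℓ L) (hp : Integrable L p) (hq : Integrable L q) :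
    ‖∫ x, L x ∂p - ∫ x, L x ∂q‖ₑ ≤ ℓ * ∫⁻ z, edist z.1 z.2 ∂γ := by
  have h_fst : Integrable (fun z : X × X => L z.1) γ :=
    (hγ.1 ▸ hp).comp_measurable measurable_fst
  have h_snd : Integrable (fun z : X × X => L z.2) γ :=
    (hγ.2 ▸ hq).comp_measurable measurable_snd
  rw [← hγ.1, ← hγ.2,
    integral_map measurable_fst.aemeasurable hL.continuous.aestronglyMeasurable,
    integral_map measurable_snd.aemeasurable hL.continuous.aestronglyMeasurable,
    ← integral_sub h_fst h_snd, ← lintegral_const_mul' _ _ ENNReal.coe_ne_top]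
  refine (enorm_integral_le_lintegral_enorm _).trans (lintegral_mono fun z => ?_)
  rw [← edist_eq_enorm_sub]
  exact hL z.1 z.2

variable [IsProbabilityMeasure p] [IsProbabilityMeasure q]

lemma enorm_integral_sub_le_mul_W2 (hL : LipschitzWith ℓ L) (hp : Integrable L p)
    (hq : Integrable L q) : ‖∫ x, L x ∂p - ∫ x, L x ∂q‖ₑ ≤ ℓ * W2 p q := by
  have : Nonempty (couplings p q) := ⟨⟨_, prod_mem_couplings⟩⟩
  rw [W2_eq_iInf_couplings, ENNReal.mul_iInf (by simp)]
  refine le_iInf fun ⟨γ, hγ⟩ => ?_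
  have := isProbabilityMeasure_of_mem_couplings hγ
  exact (enorm_integral_sub_le_of_mem_couplings hγ hL hp hq).trans
    (by gcongr; exact lintegral_le_rpow_lintegral_sq γ _)

lemma abs_integral_sub_le_mul_W2 (hp₂ : FiniteSecondMoment p) (hq₂ : FiniteSecondMoment q)
    (hL : LipschitzWith ℓ L) (hp : Integrable L p) (hq : Integrable L q) :
    |∫ x, L x ∂p - ∫ x, L x ∂q| ≤ ℓ * (W2 p q).toReal := by
  have h := ENNReal.toReal_mono (by finiteness [W2_ne_top hp₂ hq₂])
    (enorm_integral_sub_le_mul_W2 hL hp hq)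
  simpa using h

end Lipschitz

/-- Wasserstein group fairness disparity bound: for probability measures
`ps, ps', pstar` with finite second moments on a metric space, Lipschitz losses `Ls, Ls'`
with constants `ℓs, ℓs'` integrable w.r.t. these measures, and `|Ls z − Ls' z| ≤ K` for
`pstar`-a.e. `z`, we have
`|∫ Ls dps − ∫ Ls' dps'| ≤ ℓs · W₂(ps, pstar) + ℓs' · W₂(ps', pstar) + K`. -/
theorem wasserstein_group_disparity_bound
    {X : Type*} [MetricSpace X] [MeasurableSpace X] [BorelSpace X]
    (ps ps' pstar : Measure X)
    [IsProbabilityMeasure ps] [IsProbabilityMeasure ps'] [IsProbabilityMeasure pstar]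
    (hps : FiniteSecondMoment ps) (hps' : FiniteSecondMoment ps')
    (hpstar : FiniteSecondMoment pstar)
    (Ls Ls' : X → ℝ) (ℓs ℓs' : ℝ≥0)
    (hLs : LipschitzWith ℓs Ls) (hLs' : LipschitzWith ℓs' Ls')
    (hint1 : Integrable Ls ps) (hint2 : Integrable Ls' ps')
    (hint3 : Integrable Ls pstar) (hint4 : Integrable Ls' pstar)
    (K : ℝ) (hK : ∀ᵐ z ∂pstar, |Ls z - Ls' z| ≤ K) :
    |∫ z, Ls z ∂ps - ∫ z, Ls' z ∂ps'| ≤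
      (ℓs : ℝ) * (W2 ps pstar).toReal + (ℓs' : ℝ) * (W2 ps' pstar).toReal + K := by
  have hs := abs_integral_sub_le_mul_W2 hps hpstar hLs hint1 hint3
  have hs' := abs_integral_sub_le_mul_W2 hps' hpstar hLs' hint2 hint4
  have hstar : |∫ z, Ls z ∂pstar - ∫ z, Ls' z ∂pstar| ≤ K := by
    rw [← integral_sub hint3 hint4]
    simpa using norm_integral_le_of_norm_le_const (μ := pstar) (f := fun z => Ls z - Ls' z)
      (by simpa only [Real.norm_eq_abs] using hK)
  rw [abs_sub_comm] at hs'
  have := abs_sub_le (∫ z, Ls z ∂ps) (∫ z, Ls z ∂pstar) (∫ z, Ls' z ∂pstar)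
  have := abs_sub_le (∫ z, Ls z ∂ps) (∫ z, Ls' z ∂pstar) (∫ z, Ls' z ∂ps')
  linarith
end
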